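/- arXiv:1904.09841 — 3 statements merged into one kernel-verified Lean document; each statement's English description precedes it below -/
import Mathlib

section
/- Let A ∈ ℝ^{n×n}, W ∈ {0,1}^{n×n}, and let ‖·‖_* be an entrywise matrix norm. Let W_Π ∈ {0,1}^{n×n} be a binary matrix whose support {(i,j) : (W_Π)_{i,j} = 1} can be partitioned into at most r combinatorial rectangles. Let OPT = min over matrices L̂ of rank at most k of ‖(A − L̂) ∘ W‖_*, achieved by a rank-at-most-k matrix L_opt. Then for every k' ≥ k·r and every matrix L of rank at most k' satisfying ‖A ∘ W − L‖_* ≤ (min over matrices L̂ of rank at most k' of ‖A ∘ W − L̂‖_*) + Δ for some Δ ≥ 0, it holds that ‖(A − L) ∘ W‖_* ≤ OPT + ‖A ∘ W ∘ (1 − W_Π)‖_* + ‖L_opt ∘ (1 − W) ∘ W_Π‖_* + Δ. -/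
open Matrix BigOperators

/-- Entrywise matrix norm induced by `g`: `‖M‖_* = ∑_{i,j} g |M_{i,j}|`. -/
noncomputable def enorm {n p : ℕ} (g : ℝ → ℝ) (M : Matrix (Fin n) (Fin p) ℝ) : ℝ :=
  ∑ i, ∑ j, g |M i j|

/-- The entrywise complement `1 - W` of a binary matrix `W`. -/
def oneSub {n p : ℕ} (W : Matrix (Fin n) (Fin p) ℝ) : Matrix (Fin n) (Fin p) ℝ :=
  Matrix.of fun i j => 1 - W i j

/-!
The matrix `Lopt ∘ Wπ` is a competitor of rank at most `k r`: since the support of `Wπ` is a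
disjoint union of `r` rectangles `S c × T c`, it equals `∑ c, D_{S c} Lopt D_{T c}` with diagonal
indicator matrices `D`. Hence the near-optimality of `L` among rank-`k'` matrices bounds
`‖A ∘ W - L‖_*` by `‖A ∘ W - Lopt ∘ Wπ‖_* + Δ`, and in every entry `A ∘ W - Lopt ∘ Wπ` is dominated
by one of `(A - Lopt) ∘ W`, `A ∘ W ∘ (1 - Wπ)`, `Lopt ∘ (1 - W) ∘ Wπ`. Finally masking by `W`
after subtracting `L` only shrinks entries.
-/

namespace Matrix

variable {ι m n K : Type*} [Fintype n] [Field K]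

theorem rank_add_le (A B : Matrix m n K) : (A + B).rank ≤ A.rank + B.rank := by
  have hrange : LinearMap.range (A + B).mulVecLin ≤
      LinearMap.range A.mulVecLin ⊔ LinearMap.range B.mulVecLin := by
    rintro _ ⟨v, rfl⟩
    exact Submodule.mem_sup.2
      ⟨A *ᵥ v, ⟨v, rfl⟩, B *ᵥ v, ⟨v, rfl⟩, by simp⟩
  exact (Submodule.finrank_mono hrange).trans (Submodule.finrank_add_le_finrank_add_finrank _ _)

theorem rank_sum_le (s : Finset ι) (M : ι → Matrix m n K) :
    (∑ c ∈ s, M c).rank ≤ ∑ c ∈ s, (M c).rank := by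
  classical
  induction s using Finset.induction_on with
  | empty => simp
  | insert c s hc ih =>
    rw [Finset.sum_insert hc, Finset.sum_insert hc]
    exact (rank_add_le _ _).trans (Nat.add_le_add_left ih _)

variable [Fintype m] [DecidableEq m] [DecidableEq n]

theorem hadamard_vecMulVec (M : Matrix m n K) (u : m → K) (v : n → K) :
    M ⊙ vecMulVec u v = diagonal u * M * diagonal v := by
  ext i j
  simp only [hadamard_apply, vecMulVec_apply, mul_diagonal, diagonal_mul]
  ring

theorem rank_hadamard_sum_vecMulVec_le (M : Matrix m n K) (s : Finset ι)
    (u : ι → m → K) (v : ι → n → K) :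
    (M ⊙ ∑ c ∈ s, vecMulVec (u c) (v c)).rank ≤ s.card * M.rank := by
  have hsum : M ⊙ ∑ c ∈ s, vecMulVec (u c) (v c) = ∑ c ∈ s, M ⊙ vecMulVec (u c) (v c) := by
    ext i j
    simp only [hadamard_apply, sum_apply, Finset.mul_sum]
  calc (M ⊙ ∑ c ∈ s, vecMulVec (u c) (v c)).rank
      ≤ ∑ c ∈ s, (M ⊙ vecMulVec (u c) (v c)).rank := hsum ▸ rank_sum_le _ _
    _ ≤ ∑ _c ∈ s, M.rank := Finset.sum_le_sum fun c _ => by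
        rw [hadamard_vecMulVec]
        exact (rank_mul_le_left _ _).trans (rank_mul_le_right _ _)
    _ = s.card * M.rank := by rw [Finset.sum_const, smul_eq_mul]

end Matrix

theorem eq_sum_vecMulVec_indicator_of_rectangle_partition {ι m n R : Type*} [Fintype ι]
    [Semiring R] (P : Matrix m n R) (S : ι → Set m) (T : ι → Set n)
    (hbin : ∀ i j, P i j = 0 ∨ P i j = 1)
    (hcover : ∀ i j, P i j = 1 ↔ ∃ c, i ∈ S c ∧ j ∈ T c)
    (hdisj : ∀ c c' i j, (i ∈ S c ∧ j ∈ T c) → (i ∈ S c' ∧ j ∈ T c') → c = c') :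
    P = ∑ c, vecMulVec ((S c).indicator 1) ((T c).indicator 1) := by
  classical
  ext i j
  have hentry : ∀ c, ((S c).indicator 1 i * (T c).indicator 1 j : R) =
      if i ∈ S c ∧ j ∈ T c then 1 else 0 := fun c => by
    by_cases hi : i ∈ S c <;> by_cases hj : j ∈ T c <;> simp [hi, hj]
  simp only [Matrix.sum_apply, vecMulVec_apply, hentry]
  by_cases hmem : ∃ c, i ∈ S c ∧ j ∈ T c
  · obtain ⟨c, hc⟩ := hmem
    rw [(hcover i j).2 ⟨c, hc⟩, Finset.sum_eq_single c
      (fun c' _ hne => if_neg fun hc' => hne (hdisj c' c i j hc' hc)) (by simp), if_pos hc]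
  · have hP : P i j = 0 := (hbin i j).resolve_right fun h => hmem ((hcover i j).1 h)
    rw [hP, Finset.sum_eq_zero fun c _ => if_neg fun hc => hmem ⟨c, hc⟩]

section EntrywiseNorm

variable {n p : ℕ} {g : ℝ → ℝ}

theorem enorm_nonneg_of_nonneg (hg_nonneg : ∀ x, 0 ≤ x → 0 ≤ g x)
    (M : Matrix (Fin n) (Fin p) ℝ) : 0 ≤ enorm g M :=
  Finset.sum_nonneg fun _ _ => Finset.sum_nonneg fun _ _ => hg_nonneg _ (abs_nonneg _)

theorem enorm_le_of_abs_le (hg_mono : ∀ x y, 0 ≤ x → x ≤ y → g x ≤ g y)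
    {M N : Matrix (Fin n) (Fin p) ℝ} (h : ∀ i j, |M i j| ≤ |N i j|) :
    enorm g M ≤ enorm g N :=
  Finset.sum_le_sum fun i _ => Finset.sum_le_sum fun j _ => hg_mono _ _ (abs_nonneg _) (h i j)

theorem enorm_le_sum_of_forall_exists_abs_le {ι : Type*} [Fintype ι]
    (hg_nonneg : ∀ x, 0 ≤ x → 0 ≤ g x) (hg_mono : ∀ x y, 0 ≤ x → x ≤ y → g x ≤ g y)
    {M : Matrix (Fin n) (Fin p) ℝ} (N : ι → Matrix (Fin n) (Fin p) ℝ)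
    (h : ∀ i j, ∃ c, |M i j| ≤ |N c i j|) :
    enorm g M ≤ ∑ c, enorm g (N c) := by
  have hentry : ∀ i j, g |M i j| ≤ ∑ c, g |N c i j| := fun i j => by
    obtain ⟨c, hc⟩ := h i j
    exact (hg_mono _ _ (abs_nonneg _) hc).trans <| Finset.single_le_sum
      (f := fun c => g |N c i j|) (fun c _ => hg_nonneg _ (abs_nonneg _)) (Finset.mem_univ c)
  calc enorm g M ≤ ∑ i, ∑ j, ∑ c, g |N c i j| :=
        Finset.sum_le_sum fun i _ => Finset.sum_le_sum fun j _ => hentry i j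
    _ = ∑ i, ∑ c, ∑ j, g |N c i j| := Finset.sum_congr rfl fun _ _ => Finset.sum_comm
    _ = ∑ c, enorm g (N c) := Finset.sum_comm

theorem sInf_enorm_sub_le_of_rank_le (hg_nonneg : ∀ x, 0 ≤ x → 0 ≤ g x) {r : ℕ}
    (B C : Matrix (Fin n) (Fin n) ℝ) (hC : C.rank ≤ r) :
    sInf {x : ℝ | ∃ M : Matrix (Fin n) (Fin n) ℝ, M.rank ≤ r ∧ x = enorm g (B - M)} ≤
      enorm g (B - C) :=
  csInf_le ⟨0, by rintro _ ⟨M, _, rfl⟩; exact enorm_nonneg_of_nonneg hg_nonneg _⟩ ⟨C, hC, rfl⟩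

theorem enorm_sub_hadamard_le_enorm_hadamard_sub (hg_mono : ∀ x y, 0 ≤ x → x ≤ y → g x ≤ g y)
    {A L W : Matrix (Fin n) (Fin p) ℝ} (hW : ∀ i j, W i j = 0 ∨ W i j = 1) :
    enorm g ((A - L) ⊙ W) ≤ enorm g (A ⊙ W - L) :=
  enorm_le_of_abs_le hg_mono fun i j => by
    rcases hW i j with h | h <;> simp [h]

theorem enorm_hadamard_sub_hadamard_le (hg_nonneg : ∀ x, 0 ≤ x → 0 ≤ g x)
    (hg_mono : ∀ x y, 0 ≤ x → x ≤ y → g x ≤ g y) {A L W P : Matrix (Fin n) (Fin p) ℝ}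
    (hW : ∀ i j, W i j = 0 ∨ W i j = 1) (hP : ∀ i j, P i j = 0 ∨ P i j = 1) :
    enorm g (A ⊙ W - L ⊙ P) ≤
      enorm g ((A - L) ⊙ W) + enorm g (A ⊙ W ⊙ oneSub P) + enorm g (L ⊙ oneSub W ⊙ P) := by
  have hentry : ∀ i j, ∃ c, |(A ⊙ W - L ⊙ P) i j| ≤
      |(![(A - L) ⊙ W, A ⊙ W ⊙ oneSub P, L ⊙ oneSub W ⊙ P] c) i j| := fun i j => by
    rcases hP i j with hp | hp
    · exact ⟨1, by simp [hp, oneSub]⟩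
    rcases hW i j with hw | hw
    · exact ⟨2, by simp [hp, hw, oneSub]⟩
    · exact ⟨0, by simp [hp, hw]⟩
  simpa [Fin.sum_univ_three, add_assoc] using
    enorm_le_sum_of_forall_exists_abs_le hg_nonneg hg_mono _ hentry

end EntrywiseNorm

theorem stmt1_general
    {n k k' r : ℕ}
    (A W Wpi : Matrix (Fin n) (Fin n) ℝ)
    (hWbin : ∀ i j, W i j = 0 ∨ W i j = 1)
    (hWpibin : ∀ i j, Wpi i j = 0 ∨ Wpi i j = 1)
    (g : ℝ → ℝ)
    (hg_nonneg : ∀ x : ℝ, 0 ≤ x → 0 ≤ g x)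
    (hg_mono : ∀ x y : ℝ, 0 ≤ x → x ≤ y → g x ≤ g y)
    (Δ : ℝ)
    -- the support of `Wpi` is partitioned into the rectangles `S c ×ˢ T c`, `c : Fin r`
    (S T : Fin r → Set (Fin n))
    (h_cover : ∀ i j, Wpi i j = 1 ↔ ∃ c, i ∈ S c ∧ j ∈ T c)
    (h_disj : ∀ (c c' : Fin r) (i j : Fin n),
      (i ∈ S c ∧ j ∈ T c) → (i ∈ S c' ∧ j ∈ T c') → c = c')
    (Lopt : Matrix (Fin n) (Fin n) ℝ) (hLopt_rank : Lopt.rank ≤ k)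
    (hk' : k * r ≤ k')
    (L : Matrix (Fin n) (Fin n) ℝ)
    (hL_near : enorm g (Matrix.hadamard A W - L) ≤
      sInf {x : ℝ | ∃ M : Matrix (Fin n) (Fin n) ℝ, M.rank ≤ k' ∧
        x = enorm g (Matrix.hadamard A W - M)} + Δ) :
    enorm g (Matrix.hadamard (A - L) W) ≤
      enorm g (Matrix.hadamard (A - Lopt) W)
        + enorm g (Matrix.hadamard (Matrix.hadamard A W) (oneSub Wpi))
        + enorm g (Matrix.hadamard (Matrix.hadamard Lopt (oneSub W)) Wpi) + Δ := by
  have hrank : (Lopt ⊙ Wpi).rank ≤ k' := by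
    rw [eq_sum_vecMulVec_indicator_of_rectangle_partition Wpi S T hWpibin h_cover h_disj]
    calc _ ≤ Finset.univ.card * Lopt.rank := Matrix.rank_hadamard_sum_vecMulVec_le _ _ _ _
      _ ≤ r * k := by rw [Finset.card_univ, Fintype.card_fin]; gcongr
      _ ≤ k' := by rwa [mul_comm]
  calc enorm g ((A - L) ⊙ W)
      ≤ enorm g (A ⊙ W - L) := enorm_sub_hadamard_le_enorm_hadamard_sub hg_mono hWbin
    _ ≤ enorm g (A ⊙ W - Lopt ⊙ Wpi) + Δ := by
        linarith [sInf_enorm_sub_le_of_rank_le hg_nonneg (A ⊙ W) _ hrank]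
    _ ≤ _ := by
        gcongr
        exact enorm_hadamard_sub_hadamard_le hg_nonneg hg_mono hWbin hWpibin

/-- bicriteria masked low-rank approximation relative to a binary matrix `Wpi`
whose support is partitioned into at most `r` combinatorial rectangles. -/
theorem stmt1
    {n k k' r : ℕ}
    (A W Wpi : Matrix (Fin n) (Fin n) ℝ)
    (hWbin : ∀ i j, W i j = 0 ∨ W i j = 1)
    (hWpibin : ∀ i j, Wpi i j = 0 ∨ Wpi i j = 1)
    (g : ℝ → ℝ) (hg0 : g 0 = 0)
    (hg_nonneg : ∀ x : ℝ, 0 ≤ x → 0 ≤ g x)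
    (hg_mono : ∀ x y : ℝ, 0 ≤ x → x ≤ y → g x ≤ g y)
    (Δ : ℝ) (hΔ : 0 ≤ Δ)
    -- the support of `Wpi` is partitioned into the rectangles `S c ×ˢ T c`, `c : Fin r`
    (S T : Fin r → Set (Fin n))
    (h_cover : ∀ i j, Wpi i j = 1 ↔ ∃ c, i ∈ S c ∧ j ∈ T c)
    (h_disj : ∀ (c c' : Fin r) (i j : Fin n),
      (i ∈ S c ∧ j ∈ T c) → (i ∈ S c' ∧ j ∈ T c') → c = c')
    -- `Lopt` achieves `OPT`, the min over rank-at-most-`k` matrices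
    (Lopt : Matrix (Fin n) (Fin n) ℝ) (hLopt_rank : Lopt.rank ≤ k)
    (hLopt_opt : ∀ M : Matrix (Fin n) (Fin n) ℝ, M.rank ≤ k →
      enorm g (Matrix.hadamard (A - Lopt) W) ≤ enorm g (Matrix.hadamard (A - M) W))
    (hk' : k * r ≤ k')
    (L : Matrix (Fin n) (Fin n) ℝ) (hL_rank : L.rank ≤ k')
    (hL_near : enorm g (Matrix.hadamard A W - L) ≤
      sInf {x : ℝ | ∃ M : Matrix (Fin n) (Fin n) ℝ, M.rank ≤ k' ∧
        x = enorm g (Matrix.hadamard A W - M)} + Δ) :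
    enorm g (Matrix.hadamard (A - L) W) ≤
      enorm g (Matrix.hadamard (A - Lopt) W)
        + enorm g (Matrix.hadamard (Matrix.hadamard A W) (oneSub Wpi))
        + enorm g (Matrix.hadamard (Matrix.hadamard Lopt (oneSub W)) Wpi) + Δ :=
  stmt1_general A W Wpi hWbin hWpibin g hg_nonneg hg_mono Δ S T h_cover h_disj Lopt hLopt_rank hk' L
    hL_near
end

section
/- Boolean low-rank plus block diagonal approximation: Let A ∈ {0,1}^{n×n}, let B₁ ∪ … ∪ B_b = [n] be a partition of [n] with b ≥ 2, and let W ∈ {0,1}^{n×n} be defined by W_{i,j} = 0 if i and j lie in the same block and W_{i,j} = 1 otherwise. Then for every k' ≥ 8k⌈log₂ b⌉, if U ∈ {0,1}^{n×k'} and V ∈ {0,1}^{k'×n} satisfy ‖A ∘ W − U·V‖₀ ≤ (min over Û ∈ {0,1}^{n×k'}, V̂ ∈ {0,1}^{k'×n} of ‖A ∘ W − Û·V̂‖₀) + Δ for some Δ ≥ 0, then ‖(A − U·V) ∘ W‖₀ ≤ 8⌈log₂ b⌉·OPT + Δ, where OPT = min over Û ∈ {0,1}^{n×k}, V̂ ∈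 {0,1}^{k×n} of ‖(A − Û·V̂) ∘ W‖₀. -/
open BigOperators

/-- Boolean matrix product: `(U·V)_{i,j} = 1` iff `∃ l, U_{i,l} = 1 ∧ V_{l,j} = 1`. -/
def bMul {n k : ℕ} (U : Fin n → Fin k → Bool) (V : Fin k → Fin n → Bool) :
    Fin n → Fin n → Bool :=
  fun i j => decide (∃ l, U i l = true ∧ V l j = true)

/-- Entrywise AND (Hadamard product of Boolean matrices). -/
def bHad {n : ℕ} (M N : Fin n → Fin n → Bool) : Fin n → Fin n → Bool :=
  fun i j => M i j && N i j

/-- `‖M − N‖₀`: the number of entries where the Boolean matrices `M` and `N` differ. -/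
def l0diff {n : ℕ} (M N : Fin n → Fin n → Bool) : ℕ :=
  (Finset.univ.filter fun p : Fin n × Fin n => M p.1 p.2 ≠ N p.1 p.2).card

/-- `‖(M − N) ∘ W‖₀`: the number of entries in the support of `W` where `M` and `N` differ. -/
def l0maskdiff {n : ℕ} (W M N : Fin n → Fin n → Bool) : ℕ :=
  (Finset.univ.filter fun p : Fin n × Fin n =>
    W p.1 p.2 = true ∧ M p.1 p.2 ≠ N p.1 p.2).card

/-!
Let `U₀ V₀` be an optimal rank-`k` solution of the masked problem. The mask `W` is the union of
the `2⌈log₂ b⌉` combinatorial rectangles `{i | bit t of blk i is s} × {j | bit t of blk j is not s}`,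
so `(U₀V₀) ∘ W` is a union of `2k⌈log₂ b⌉ ≤ k'` rectangles, i.e. a Boolean product of rank `k'`.
It differs from `A ∘ W` exactly where `U₀V₀` differs from `A` on the support of `W`, so the
unmasked rank-`k'` optimum for `A ∘ W` is at most `OPT`. As the masked error of any `UV` is at
most its error against `A ∘ W`, the masked error of the given `UV` is at most `OPT + Δ`.
-/
lemma Nat.exists_lt_testBit_ne_of_lt_two_pow {L x y : ℕ} (hx : x < 2 ^ L) (hy : y < 2 ^ L)
    (hxy : x ≠ y) : ∃ t < L, x.testBit t ≠ y.testBit t := by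
  obtain ⟨t, ht⟩ := Nat.exists_testBit_ne_of_ne hxy
  refine ⟨t, lt_of_not_ge fun hLt => ht ?_, ht⟩
  have hpow : 2 ^ L ≤ 2 ^ t := Nat.pow_le_pow_right two_pos hLt
  rw [Nat.testBit_lt_two_pow (hx.trans_le hpow), Nat.testBit_lt_two_pow (hy.trans_le hpow)]

lemma Fin.exists_testBit_eq_and_ne_iff_ne {b L : ℕ} (hb : b ≤ 2 ^ L) (x y : Fin b) :
    (∃ p : Fin L × Bool, (x : ℕ).testBit p.1 = p.2 ∧ (y : ℕ).testBit p.1 ≠ p.2) ↔ x ≠ y := by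
  constructor
  · rintro ⟨p, hx, hy⟩ rfl
    exact hy hx
  · intro hxy
    obtain ⟨t, ht, hbit⟩ := Nat.exists_lt_testBit_ne_of_lt_two_pow (x.2.trans_le hb)
      (y.2.trans_le hb) (Fin.val_ne_of_ne hxy)
    exact ⟨(⟨t, ht⟩, (x : ℕ).testBit t), rfl, hbit.symm⟩

lemma exists_bMul_eq_of_rectangle_cover {n k : ℕ} {ι : Type*} [Fintype ι]
    (hι : Fintype.card ι ≤ k) (R : Fin n → ι → Prop) (C : ι → Fin n → Prop)
    (M : Fin n → Fin n → Bool) (hM : ∀ i j, M i j = true ↔ ∃ p, R i p ∧ C p j) :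
    ∃ (U : Fin n → Fin k → Bool) (V : Fin k → Fin n → Bool), bMul U V = M := by
  classical
  obtain ⟨e⟩ := Function.Embedding.nonempty_of_card_le (hι.trans (Fintype.card_fin k).ge)
  refine ⟨fun i l => decide (∃ p, e p = l ∧ R i p), fun l j => decide (∃ p, e p = l ∧ C p j), ?_⟩
  funext i j
  rw [Bool.eq_iff_iff, hM, bMul, decide_eq_true_iff]
  simp only [decide_eq_true_eq]
  constructor
  · rintro ⟨l, ⟨p, rfl, hR⟩, ⟨q, hqp, hC⟩⟩
    obtain rfl := e.injective hqp
    exact ⟨q, hR, hC⟩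
  · rintro ⟨p, hR, hC⟩
    exact ⟨e p, ⟨p, rfl, hR⟩, ⟨p, rfl, hC⟩⟩

lemma exists_bMul_eq_bHad_bMul_of_blocks {n b k k' : ℕ} (blk : Fin n → Fin b)
    (W : Fin n → Fin n → Bool) (hW : ∀ i j, W i j = true ↔ blk i ≠ blk j)
    (hk' : k * (Nat.clog 2 b * 2) ≤ k') (U : Fin n → Fin k → Bool) (V : Fin k → Fin n → Bool) :
    ∃ (U' : Fin n → Fin k' → Bool) (V' : Fin k' → Fin n → Bool),
      bMul U' V' = bHad (bMul U V) W := by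
  have hb : b ≤ 2 ^ Nat.clog 2 b := Nat.le_pow_clog one_lt_two b
  refine exists_bMul_eq_of_rectangle_cover (ι := Fin k × (Fin (Nat.clog 2 b) × Bool))
    (by simpa using hk')
    (fun i p => U i p.1 = true ∧ (blk i : ℕ).testBit p.2.1 = p.2.2)
    (fun p j => V p.1 j = true ∧ (blk j : ℕ).testBit p.2.1 ≠ p.2.2) _ fun i j => ?_
  rw [bHad, Bool.and_eq_true, hW, ← Fin.exists_testBit_eq_and_ne_iff_ne hb, bMul,
    decide_eq_true_iff]
  constructor
  · rintro ⟨⟨l, hU, hV⟩, p, hi, hj⟩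
    exact ⟨(l, p), ⟨hU, hi⟩, hV, hj⟩
  · rintro ⟨⟨l, p⟩, ⟨hU, hi⟩, hV, hj⟩
    exact ⟨⟨l, hU, hV⟩, p, hi, hj⟩

lemma l0maskdiff_le_l0diff_bHad {n : ℕ} (W A N : Fin n → Fin n → Bool) :
    l0maskdiff W A N ≤ l0diff (bHad A W) N := by
  refine Finset.card_le_card (Finset.monotone_filter_right _ fun p _ ⟨hw, hne⟩ => ?_)
  simpa [bHad, hw] using hne

lemma l0diff_bHad_bHad {n : ℕ} (W A M : Fin n → Fin n → Bool) :
    l0diff (bHad A W) (bHad M W) = l0maskdiff W A M := by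
  unfold l0diff l0maskdiff
  congr 1
  refine Finset.filter_congr fun ⟨i, j⟩ _ => ?_
  cases hw : W i j <;> simp [bHad, hw]

lemma sInf_l0diff_bHad_le_sInf_l0maskdiff {n b k k' : ℕ} (A : Fin n → Fin n → Bool)
    (blk : Fin n → Fin b) (W : Fin n → Fin n → Bool) (hW : ∀ i j, W i j = true ↔ blk i ≠ blk j)
    (hk' : k * (Nat.clog 2 b * 2) ≤ k') :
    sInf {x : ℕ | ∃ (U : Fin n → Fin k' → Bool) (V : Fin k' → Fin n → Bool),
        x = l0diff (bHad A W) (bMul U V)} ≤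
      sInf {x : ℕ | ∃ (U : Fin n → Fin k → Bool) (V : Fin k → Fin n → Bool),
        x = l0maskdiff W A (bMul U V)} := by
  obtain ⟨U, V, hopt⟩ := Nat.sInf_mem (s := {x : ℕ | ∃ (U : Fin n → Fin k → Bool)
    (V : Fin k → Fin n → Bool), x = l0maskdiff W A (bMul U V)}) ⟨_, 0, 0, rfl⟩
  obtain ⟨U', V', hUV'⟩ := exists_bMul_eq_bHad_bMul_of_blocks blk W hW hk' U V
  rw [hopt, ← l0diff_bHad_bHad, ← hUV']
  exact Nat.sInf_le ⟨U', V', rfl⟩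

theorem stmt12_general
    {n b k k' : ℕ} (hb : 2 ≤ b)
    (A : Fin n → Fin n → Bool)
    (blk : Fin n → Fin b)
    (W : Fin n → Fin n → Bool)
    (hW : ∀ i j, W i j = true ↔ blk i ≠ blk j)
    (hk' : 8 * k * Nat.clog 2 b ≤ k') (Δ : ℕ)
    (U : Fin n → Fin k' → Bool) (V : Fin k' → Fin n → Bool)
    (hUV : l0diff (bHad A W) (bMul U V) ≤
      sInf {x : ℕ | ∃ (U' : Fin n → Fin k' → Bool) (V' : Fin k' → Fin n → Bool),
        x = l0diff (bHad A W) (bMul U' V')} + Δ) :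
    l0maskdiff W A (bMul U V) ≤
      8 * Nat.clog 2 b * sInf {x : ℕ | ∃ (U' : Fin n → Fin k → Bool) (V' : Fin k → Fin n → Bool),
        x = l0maskdiff W A (bMul U' V')} + Δ := by
  have hL : 1 ≤ 8 * Nat.clog 2 b := by
    have := Nat.clog_pos one_lt_two hb
    omega
  have hrank : k * (Nat.clog 2 b * 2) ≤ k' := by nlinarith
  have hopt := sInf_l0diff_bHad_le_sInf_l0maskdiff A blk W hW hrank
  calc l0maskdiff W A (bMul U V) ≤ l0diff (bHad A W) (bMul U V) :=
        l0maskdiff_le_l0diff_bHad W A _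
    _ ≤ _ := hUV
    _ ≤ _ := by gcongr; exact hopt.trans (Nat.le_mul_of_pos_left _ hL)

/-- Boolean low-rank plus block diagonal approximation. The partition
`B₁ ∪ … ∪ B_b = [n]` is encoded by a surjective block-assignment map `blk : Fin n → Fin b`,
and `⌈log₂ b⌉ = Nat.clog 2 b`. -/
theorem stmt12
    {n b k k' : ℕ} (hb : 2 ≤ b)
    (A : Fin n → Fin n → Bool)
    (blk : Fin n → Fin b) (hblk : Function.Surjective blk)
    (W : Fin n → Fin n → Bool)
    (hW : ∀ i j, W i j = true ↔ blk i ≠ blk j)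
    (hk' : 8 * k * Nat.clog 2 b ≤ k') (Δ : ℕ)
    (U : Fin n → Fin k' → Bool) (V : Fin k' → Fin n → Bool)
    (hUV : l0diff (bHad A W) (bMul U V) ≤
      sInf {x : ℕ | ∃ (U' : Fin n → Fin k' → Bool) (V' : Fin k' → Fin n → Bool),
        x = l0diff (bHad A W) (bMul U' V')} + Δ) :
    l0maskdiff W A (bMul U V) ≤
      8 * Nat.clog 2 b * sInf {x : ℕ | ∃ (U' : Fin n → Fin k → Bool) (V' : Fin k → Fin n → Bool),
        x = l0maskdiff W A (bMul U' V')} + Δ :=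
  stmt12_general hb A blk W hW hk' Δ U V hUV
end

section
/- Sparse difference of approximate low-rank-plus-diagonal solutions: Let A, L, L' ∈ ℝ^{n×n} with L and L' each of rank at most k. Define diagonal matrices D and D' by D(i,i) = A(i,i) − L(i,i) and D'(i,i) = A(i,i) − L'(i,i) for all i (so D minimizes ‖A − (D̂ + L)‖_F² over all diagonal D̂, and similarly D'). Suppose ‖A − (D + L)‖_F² = C and ‖A − (D' + L')‖_F² ≤ C + γ for some γ ≥ 0. Then for every ε ∈ (0,1) there exists a set S ⊆ [n] with |S| ≤ 10k/ε² such that ∑_{i ∉ S} (D(i,i) − D'(i,i))² ≤ ε²C + ε²γ. The same conclusion holds if instead D(i,i) = max(0, A(i,i) − L(i,i)) and D'(i,i) = max(0, A(i,i) − L'(i,i)) (the minimizers over non-negative diagonal matrices). -/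
/-!
Put `M = L' - L`, a matrix of rank at most `2k`, and let `W` be its row space. The leverage
scores `ℓᵢ = ‖P_W eᵢ‖²` sum to `dim W` and satisfy `vᵢ² ≤ ℓᵢ ‖v‖²` for `v ∈ W`. Hence fewer than
`(1 + δ) · 2k` rows of `M` can have `‖Mᵢ‖² < (1 + δ) Mᵢᵢ²`, and on every other row `δ Mᵢᵢ²` is
at most the off-diagonal mass of that row. Diagonal corrections leave off-diagonal entries
alone, so the off-diagonal mass of `M` is at most `2C + 2(C + γ)`; take `δ = 4 / ε²`.
Since `x ↦ max 0 x` is 1-Lipschitz, the non-negative case follows from the same bound.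
-/

open Matrix BigOperators

/-- Squared Frobenius norm. -/
noncomputable def frob2 {n p : ℕ} (M : Matrix (Fin n) (Fin p) ℝ) : ℝ :=
  ∑ i, ∑ j, (M i j) ^ 2

open Module

lemma Matrix.rank_sub_le {m n K : Type*} [Fintype m] [Fintype n] [Field K] (A B : Matrix m n K) :
    (A - B).rank ≤ A.rank + B.rank := by
  simp only [rank_eq_finrank_span_row]
  calc finrank K (Submodule.span K (Set.range (A - B).row))
      ≤ finrank K ↥(Submodule.span K (Set.range A.row) ⊔ Submodule.span K (Set.range B.row)) := by
        refine Submodule.finrank_mono (Submodule.span_le.2 ?_)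
        rintro _ ⟨i, rfl⟩
        exact sub_mem (Submodule.mem_sup_left (Submodule.subset_span ⟨i, rfl⟩))
          (Submodule.mem_sup_right (Submodule.subset_span ⟨i, rfl⟩))
    _ ≤ _ := Submodule.finrank_add_le_finrank_add_finrank _ _

lemma Matrix.finrank_span_toLp_row {m n : Type*} [Fintype m] [Fintype n] (M : Matrix m n ℝ) :
    finrank ℝ (Submodule.span ℝ (Set.range fun i => WithLp.toLp 2 (M i))) = M.rank := by
  rw [rank_eq_finrank_span_row,
    ← LinearEquiv.finrank_map_eq (WithLp.linearEquiv 2 ℝ (n → ℝ)).symm, Submodule.map_span,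
    ← Set.range_comp]
  rfl

lemma Submodule.trace_starProjection {E : Type*} [NormedAddCommGroup E] [InnerProductSpace ℝ E]
    [FiniteDimensional ℝ E] (W : Submodule ℝ E) :
    LinearMap.trace ℝ E W.starProjection = finrank ℝ W := by
  simp only [(stdOrthonormalBasis ℝ W).starProjection_eq_sum_rankOne,
    ContinuousLinearMap.toLinearMap_sum, map_sum, InnerProductSpace.trace_rankOne,
    real_inner_self_eq_norm_sq, Submodule.norm_coe, OrthonormalBasis.norm_eq_one]
  simp

section Leverage
variable {ι : Type*} [Fintype ι] [DecidableEq ι] (W : Submodule ℝ (EuclideanSpace ℝ ι))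

noncomputable def leverage (i : ι) : ℝ := ‖W.starProjection (EuclideanSpace.single i 1)‖ ^ 2

lemma leverage_eq_inner (i : ι) :
    leverage W i =
      inner ℝ (EuclideanSpace.single i 1) (W.starProjection (EuclideanSpace.single i 1)) := by
  rw [leverage, real_inner_comm, ← RCLike.re_to_real (x := inner ℝ _ _),
    W.re_inner_starProjection_eq_normSq]
  rfl

lemma sum_leverage : ∑ i, leverage W i = finrank ℝ W := by
  rw [← W.trace_starProjection, LinearMap.trace_eq_sum_inner _ (EuclideanSpace.basisFun ι ℝ)]
  simp only [EuclideanSpace.basisFun_apply, leverage_eq_inner]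
  rfl

lemma sq_apply_le_leverage_mul {v : EuclideanSpace ℝ ι} (hv : v ∈ W) (i : ι) :
    v i ^ 2 ≤ leverage W i * ‖v‖ ^ 2 := by
  have hvi : v i = inner ℝ (W.starProjection (EuclideanSpace.single i 1)) v := by
    rw [W.inner_starProjection_left_eq_right, W.starProjection_eq_self_iff.mpr hv]
    simp [EuclideanSpace.inner_single_left]
  rw [hvi, leverage, ← mul_pow, ← sq_abs]
  exact pow_le_pow_left₀ (abs_nonneg _) (abs_real_inner_le_norm _ _) 2

lemma card_le_mul_finrank_of_norm_sq_lt
    {v : ι → EuclideanSpace ℝ ι} (hv : ∀ i, v i ∈ W) {c : ℝ} (hc : 0 ≤ c) {S : Finset ι}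
    (hS : ∀ i ∈ S, ‖v i‖ ^ 2 < c * v i i ^ 2) :
    (S.card : ℝ) ≤ c * finrank ℝ W := by
  have hlev : ∀ i ∈ S, 1 ≤ c * leverage W i := by
    intro i hi
    have hvi := mul_le_mul_of_nonneg_left (sq_apply_le_leverage_mul W (hv i) i) hc
    nlinarith [hS i hi, sq_nonneg ‖v i‖]
  calc (S.card : ℝ) = ∑ _i ∈ S, (1 : ℝ) := by simp
    _ ≤ ∑ i ∈ S, c * leverage W i := Finset.sum_le_sum hlev
    _ ≤ ∑ i, c * leverage W i :=
      Finset.sum_le_sum_of_subset_of_nonneg (Finset.subset_univ S)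
        fun i _ _ => mul_nonneg hc (by unfold leverage; positivity)
    _ = c * finrank ℝ W := by rw [← Finset.mul_sum, sum_leverage]

end Leverage

section OffDiag
variable {ι : Type*} [Fintype ι] [DecidableEq ι]

noncomputable def offDiagSq (M : Matrix ι ι ℝ) : ℝ := ∑ i, ∑ j ∈ Finset.univ.erase i, M i j ^ 2

lemma exists_card_le_and_sum_diag_sq_le (M : Matrix ι ι ℝ) {δ : ℝ} (hδ : 0 ≤ δ) :
    ∃ S : Finset ι, (S.card : ℝ) ≤ (1 + δ) * M.rank ∧
      δ * ∑ i ∈ Finset.univ \ S, M i i ^ 2 ≤ offDiagSq M := by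
  set S := Finset.univ.filter fun i => ∑ j ∈ Finset.univ.erase i, M i j ^ 2 < δ * M i i ^ 2
  refine ⟨S, ?_, ?_⟩
  · rw [← M.finrank_span_toLp_row]
    refine card_le_mul_finrank_of_norm_sq_lt _
      (fun i => Submodule.subset_span (Set.mem_range_self i)) (by linarith) fun i hi => ?_
    rw [EuclideanSpace.real_norm_sq_eq, ← Finset.add_sum_erase _ _ (Finset.mem_univ i)]
    have hi_off := (Finset.mem_filter.1 hi).2
    linarith
  · rw [Finset.mul_sum]
    calc ∑ i ∈ Finset.univ \ S, δ * M i i ^ 2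
        ≤ ∑ i ∈ Finset.univ \ S, ∑ j ∈ Finset.univ.erase i, M i j ^ 2 :=
          Finset.sum_le_sum fun i hi => not_lt.1 fun h => (Finset.mem_sdiff.1 hi).2
            (Finset.mem_filter.2 ⟨Finset.mem_univ i, h⟩)
      _ ≤ offDiagSq M :=
          Finset.sum_le_sum_of_subset_of_nonneg (Finset.subset_univ _)
            fun i _ _ => Finset.sum_nonneg fun j _ => sq_nonneg _

lemma offDiagSq_sub_le (X Y : Matrix ι ι ℝ) :
    offDiagSq (X - Y) ≤ 2 * offDiagSq X + 2 * offDiagSq Y := by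
  simp only [offDiagSq, Finset.mul_sum, ← Finset.sum_add_distrib]
  gcongr with i _ j _
  simp only [Matrix.sub_apply]
  nlinarith [sq_nonneg (X i j + Y i j)]

end OffDiag

lemma offDiagSq_sub_le_frob2 {n : ℕ} (A L : Matrix (Fin n) (Fin n) ℝ) (d : Fin n → ℝ) :
    offDiagSq (A - L) ≤ frob2 (A - (diagonal d + L)) := by
  unfold offDiagSq frob2
  refine Finset.sum_le_sum fun i _ => ?_
  rw [← Finset.add_sum_erase _ _ (Finset.mem_univ i)]
  have hoff : ∀ j ∈ Finset.univ.erase i, (A - (diagonal d + L)) i j = (A - L) i j := by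
    intro j hj
    simp [diagonal_apply_ne _ (Finset.ne_of_mem_erase hj).symm]
  rw [Finset.sum_congr rfl fun j hj => congrArg (· ^ 2) (hoff j hj)]
  exact le_add_of_nonneg_left (sq_nonneg _)

lemma sq_max_sub_max_le (a b c : ℝ) : (max c a - max c b) ^ 2 ≤ (a - b) ^ 2 := by
  rw [sq_le_sq, max_comm c, max_comm c]
  exact abs_max_sub_max_le_abs a b c

lemma exists_sum_sq_le_of_frob2_le {n k : ℕ} {A L L' : Matrix (Fin n) (Fin n) ℝ}
    (hL : L.rank ≤ k) (hL' : L'.rank ≤ k) {d d' f : Fin n → ℝ}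
    (hf : ∀ i, f i ^ 2 ≤ (L' - L) i i ^ 2) {C γ ε : ℝ} (hγ : 0 ≤ γ) (hε : 0 < ε) (hε1 : ε < 1)
    (hC : frob2 (A - (diagonal d + L)) ≤ C) (hC' : frob2 (A - (diagonal d' + L')) ≤ C + γ) :
    ∃ S : Finset (Fin n), (S.card : ℝ) ≤ 10 * k / ε ^ 2 ∧
      ∑ i ∈ Finset.univ \ S, f i ^ 2 ≤ ε ^ 2 * C + ε ^ 2 * γ := by
  have hε2 : 0 < ε ^ 2 := by positivity
  obtain ⟨S, hcard, hsum⟩ :=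
    exists_card_le_and_sum_diag_sq_le (L' - L) (δ := 4 / ε ^ 2) (by positivity)
  have hrank : ((L' - L).rank : ℝ) ≤ 2 * k := by
    exact_mod_cast (L'.rank_sub_le L).trans (by omega)
  have hoff : offDiagSq (L' - L) ≤ 2 * C + 2 * (C + γ) := by
    have hsub := offDiagSq_sub_le (A - L) (A - L')
    rw [sub_sub_sub_cancel_left] at hsub
    linarith [offDiagSq_sub_le_frob2 A L d, offDiagSq_sub_le_frob2 A L' d']
  refine ⟨S, ?_, ?_⟩
  · calc (S.card : ℝ) ≤ (1 + 4 / ε ^ 2) * (2 * k) := hcard.trans (by gcongr)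
      _ ≤ 10 * k / ε ^ 2 := by
        rw [le_div_iff₀ hε2]
        field_simp
        nlinarith [mul_le_mul_of_nonneg_left (pow_le_one₀ hε.le hε1.le : ε ^ 2 ≤ 1)
          (Nat.cast_nonneg k : (0 : ℝ) ≤ k)]
  · calc ∑ i ∈ Finset.univ \ S, f i ^ 2
        ≤ ∑ i ∈ Finset.univ \ S, (L' - L) i i ^ 2 := Finset.sum_le_sum fun i _ => hf i
      _ = ε ^ 2 / 4 * (4 / ε ^ 2 * ∑ i ∈ Finset.univ \ S, (L' - L) i i ^ 2) := by
          field_simp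
      _ ≤ ε ^ 2 / 4 * (2 * C + 2 * (C + γ)) := by gcongr; exact hsum.trans hoff
      _ ≤ ε ^ 2 * C + ε ^ 2 * γ := by nlinarith

/-- sparse difference of approximate low-rank-plus-diagonal solutions.
The first conjunct treats the minimizers over all diagonal matrices,
`D(i,i) = A(i,i) − L(i,i)`; the second treats the minimizers over non-negative
diagonal matrices, `D(i,i) = max(0, A(i,i) − L(i,i))`. -/
theorem stmt18
    {n k : ℕ}
    (A L L' : Matrix (Fin n) (Fin n) ℝ)
    (hL_rank : L.rank ≤ k) (hL'_rank : L'.rank ≤ k)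
    (C γ : ℝ) (hγ : 0 ≤ γ)
    (ε : ℝ) (hε : 0 < ε) (hε1 : ε < 1) :
    ((frob2 (A - (Matrix.diagonal (fun i => A i i - L i i) + L)) = C →
      frob2 (A - (Matrix.diagonal (fun i => A i i - L' i i) + L')) ≤ C + γ →
      ∃ S : Finset (Fin n), (S.card : ℝ) ≤ 10 * (k : ℝ) / ε ^ 2 ∧
        ∑ i ∈ Finset.univ \ S,
          ((A i i - L i i) - (A i i - L' i i)) ^ 2 ≤ ε ^ 2 * C + ε ^ 2 * γ)
    ∧
    (frob2 (A - (Matrix.diagonal (fun i => max 0 (A i i - L i i)) + L)) = C →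
      frob2 (A - (Matrix.diagonal (fun i => max 0 (A i i - L' i i)) + L')) ≤ C + γ →
      ∃ S : Finset (Fin n), (S.card : ℝ) ≤ 10 * (k : ℝ) / ε ^ 2 ∧
        ∑ i ∈ Finset.univ \ S,
          (max 0 (A i i - L i i) - max 0 (A i i - L' i i)) ^ 2 ≤ ε ^ 2 * C + ε ^ 2 * γ)) := by
  have hdiag : ∀ i, (A i i - L i i) - (A i i - L' i i) = (L' - L) i i := fun i => by
    rw [Matrix.sub_apply]
    ring
  refine ⟨fun hC hC' => ?_, fun hC hC' => ?_⟩
  · exact exists_sum_sq_le_of_frob2_le hL_rank hL'_rank (fun i => by rw [hdiag])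
      hγ hε hε1 hC.le hC'
  · exact exists_sum_sq_le_of_frob2_le hL_rank hL'_rank
      (fun i => (sq_max_sub_max_le _ _ 0).trans_eq (by rw [hdiag])) hγ hε hε1 hC.le hC'
end
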